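/- Let α be a positive NNF and x_i be a state of a discrete variable X. If no state x_j with j ≠ i occurs in α, then α|x_j ⊨ α|x_i for all j ≠ i, α|x_j ≡ α|x_k for all j, k ≠ i, and ∀x_i·α ≡ α. -/
import Mathlib


/-- A discrete formula over variables `V`, where variable `v` has states `σ v`. -/
inductive DForm (V : Type) (σ : V → Type) : Type where
  | top : DForm V σ
  | bot : DForm V σ
  | state : (v : V) → σ v → DForm V σ
  | neg : DForm V σ → DForm V σ
  | conj : DForm V σ → DForm V σ → DForm V σ
  | disj : DForm V σ → DForm V σ → DForm V σ

namespace DForm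

variable {V : Type} {σ : V → Type}

/-- Evaluation of a discrete formula in a world `w`. -/
def eval [∀ v, DecidableEq (σ v)] (w : ∀ v, σ v) : DForm V σ → Bool
  | top => true
  | bot => false
  | state v s => decide (w v = s)
  | neg φ => !(φ.eval w)
  | conj φ ψ => φ.eval w && ψ.eval w
  | disj φ ψ => φ.eval w || ψ.eval w

/-- Two formulas are equivalent when they have the same models. -/
def equiv [∀ v, DecidableEq (σ v)] (φ ψ : DForm V σ) : Prop :=
  ∀ w : ∀ v, σ v, φ.eval w = ψ.eval w

/-- `φ ⊨ ψ`: every model of `φ` is a model of `ψ`. -/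
def entails [∀ v, DecidableEq (σ v)] (φ ψ : DForm V σ) : Prop :=
  ∀ w : ∀ v, σ v, φ.eval w = true → ψ.eval w = true

/-- Conditioning `Δ|x_i`: replace occurrences of `x_i` by `⊤` and of `x_j` (`j ≠ i`) by `⊥`. -/
def cond [DecidableEq V] [∀ v, DecidableEq (σ v)] (v : V) (s : σ v) :
    DForm V σ → DForm V σ
  | top => top
  | bot => bot
  | state u t =>
      if h : u = v then (if h ▸ t = s then top else bot) else state u t
  | neg φ => neg (φ.cond v s)
  | conj φ ψ => conj (φ.cond v s) (ψ.cond v s)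
  | disj φ ψ => disj (φ.cond v s) (ψ.cond v s)

/-- Universal quantification of state `x_i`:
`∀x_i·Δ := (Δ|x_i) ∧ ⋀_{j≠i} (x_i ∨ Δ|x_j)`. -/
noncomputable def quant [DecidableEq V] [∀ v, DecidableEq (σ v)] [∀ v, Fintype (σ v)]
    (v : V) (s : σ v) (Δ : DForm V σ) : DForm V σ :=
  ((Finset.univ.filter (fun j => j ≠ s)).toList).foldr
    (fun j acc => conj (disj (state v s) (Δ.cond v j)) acc) (Δ.cond v s)

/-- The set of variables occurring in a formula. -/
def vars : DForm V σ → Set V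
  | top => ∅
  | bot => ∅
  | state u _ => {u}
  | neg φ => φ.vars
  | conj φ ψ => φ.vars ∪ ψ.vars
  | disj φ ψ => φ.vars ∪ ψ.vars

/-- Whether state `x_i` (the positive literal) occurs in the formula. -/
def stateOccurs (v : V) (s : σ v) : DForm V σ → Prop
  | top => False
  | bot => False
  | state u t => ∃ h : u = v, h ▸ t = s
  | neg φ => φ.stateOccurs v s
  | conj φ ψ => φ.stateOccurs v s ∨ ψ.stateOccurs v s
  | disj φ ψ => φ.stateOccurs v s ∨ ψ.stateOccurs v s

/-- An NNF only negates states (literals). -/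
def isNNF : DForm V σ → Prop
  | top => True
  | bot => True
  | state _ _ => True
  | neg (state _ _) => True
  | neg _ => False
  | conj φ ψ => φ.isNNF ∧ ψ.isNNF
  | disj φ ψ => φ.isNNF ∧ ψ.isNNF

/-- A positive NNF contains no negation at all. -/
def isPositive : DForm V σ → Prop
  | top => True
  | bot => True
  | state _ _ => True
  | neg _ => False
  | conj φ ψ => φ.isPositive ∧ ψ.isPositive
  | disj φ ψ => φ.isPositive ∧ ψ.isPositive

/-- A monotone NNF is positive and has at most one state per variable. -/
def monotone (Δ : DForm V σ) : Prop :=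
  Δ.isPositive ∧ ∀ (v : V) (s t : σ v), Δ.stateOccurs v s → Δ.stateOccurs v t → s = t

/-- ∨-decomposability: disjuncts of every disjunction share no variables. -/
def orDecomposable : DForm V σ → Prop
  | top => True
  | bot => True
  | state _ _ => True
  | neg φ => φ.orDecomposable
  | conj φ ψ => φ.orDecomposable ∧ ψ.orDecomposable
  | disj φ ψ => φ.vars ∩ ψ.vars = ∅ ∧ φ.orDecomposable ∧ ψ.orDecomposable

/-- ∧-decomposability: conjuncts of every conjunction share no variables. -/
def andDecomposable : DForm V σ → Prop
  | top => True
  | bot => True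
  | state _ _ => True
  | neg φ => φ.andDecomposable
  | conj φ ψ => φ.vars ∩ ψ.vars = ∅ ∧ φ.andDecomposable ∧ ψ.andDecomposable
  | disj φ ψ => φ.andDecomposable ∧ ψ.andDecomposable

section Aux
variable [DecidableEq V] [∀ v, DecidableEq (σ v)]

lemma eval_cond (v : V) (s : σ v) (α : DForm V σ) (w : ∀ u, σ u) :
    eval w (α.cond v s) = eval (Function.update w v s) α := by
  induction α with
  | top => rfl
  | bot => rfl
  | state u t =>
      by_cases h : u = v
      · subst h
        by_cases ht : t = s
        · subst ht; simp [cond, eval]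
        · simp [cond, ht, eval, Ne.symm ht]
      · simp [cond, h, eval, Function.update_of_ne h]
  | neg φ ih => simp [cond, eval, ih]
  | conj φ ψ ih1 ih2 => simp [cond, eval, ih1, ih2]
  | disj φ ψ ih1 ih2 => simp [cond, eval, ih1, ih2]

lemma eval_mono (α : DForm V σ) (hα : α.isPositive) (w w' : ∀ u, σ u)
    (hw : ∀ u t, stateOccurs u t α → w u = t → w' u = t) :
    eval w α = true → eval w' α = true := by
  induction α with
  | top => simp [eval]
  | bot => simp [eval]
  | state u t =>
      simp only [eval, decide_eq_true_eq]
      exact fun h' => hw u t ⟨rfl, rfl⟩ h'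
  | neg φ ih => exact hα.elim
  | conj φ ψ ih1 ih2 =>
      simp only [eval, Bool.and_eq_true]
      rintro ⟨h1, h2⟩
      exact ⟨ih1 hα.1 (fun u t ho => hw u t (Or.inl ho)) h1,
             ih2 hα.2 (fun u t ho => hw u t (Or.inr ho)) h2⟩
  | disj φ ψ ih1 ih2 =>
      simp only [eval, Bool.or_eq_true]
      rintro (h1 | h2)
      · exact Or.inl (ih1 hα.1 (fun u t ho => hw u t (Or.inl ho)) h1)
      · exact Or.inr (ih2 hα.2 (fun u t ho => hw u t (Or.inr ho)) h2)

lemma cond_eq (X : V) (j k : σ X) (α : DForm V σ)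
    (hj : ¬ stateOccurs X j α) (hk : ¬ stateOccurs X k α) :
    α.cond X j = α.cond X k := by
  induction α with
  | top => rfl
  | bot => rfl
  | state u t =>
      by_cases h : u = X
      · subst h
        have htj : t ≠ j := fun e => hj ⟨rfl, e⟩
        have htk : t ≠ k := fun e => hk ⟨rfl, e⟩
        simp [cond, htj, htk]
      · simp [cond, h]
  | neg φ ih => simp only [cond]; rw [ih hj hk]
  | conj φ ψ ih1 ih2 =>
      simp only [cond]
      rw [ih1 (fun p => hj (Or.inl p)) (fun p => hk (Or.inl p)),
          ih2 (fun p => hj (Or.inr p)) (fun p => hk (Or.inr p))]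
  | disj φ ψ ih1 ih2 =>
      simp only [cond]
      rw [ih1 (fun p => hj (Or.inl p)) (fun p => hk (Or.inl p)),
          ih2 (fun p => hj (Or.inr p)) (fun p => hk (Or.inr p))]

lemma eval_foldr {ι : Type} (w : ∀ u, σ u) (A : DForm V σ) (f : ι → DForm V σ)
    (b : DForm V σ) (l : List ι) :
    eval w (l.foldr (fun j acc => conj (disj A (f j)) acc) b)
      = (eval w b && l.all (fun j => eval w A || eval w (f j))) := by
  induction l with
  | nil => simp
  | cons a l ih =>
      simp only [List.foldr_cons, eval, ih, List.all_cons]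
      rw [Bool.and_comm (eval w b), Bool.and_comm (eval w b)]
      ac_rfl

end Aux

end DForm

variable {V : Type} {σ : V → Type}

open DForm in
/-- If no state `x_j` with `j ≠ i` occurs in positive NNF `α`, then
`α|x_j ⊨ α|x_i` for all `j ≠ i`, `α|x_j ≡ α|x_k` for all `j, k ≠ i`, and
`∀x_i·α ≡ α`. -/
theorem quant_of_other_states_not_occur [DecidableEq V] [∀ v, DecidableEq (σ v)]
    [∀ v, Fintype (σ v)]
    (α : DForm V σ) (hα : α.isPositive) (X : V) (i : σ X)
    (h : ∀ j : σ X, j ≠ i → ¬ stateOccurs X j α) :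
    (∀ j : σ X, j ≠ i → entails (α.cond X j) (α.cond X i)) ∧
    (∀ j k : σ X, j ≠ i → k ≠ i → equiv (α.cond X j) (α.cond X k)) ∧
    equiv (quant X i α) α := by
  have ent : ∀ j : σ X, j ≠ i → entails (α.cond X j) (α.cond X i) := by
    intro j hj w hw
    rw [eval_cond] at hw ⊢
    refine eval_mono α hα _ _ ?_ hw
    intro u t hocc heq
    by_cases hu : u = X
    · subst hu
      have hti : t = i := by
        by_contra ht; exact h t ht hocc
      rw [Function.update_self] at heq
      exact (hj (heq.trans hti)).elim
    · rw [Function.update_of_ne hu] at heq ⊢; exact heq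
  have heqv : ∀ j k : σ X, j ≠ i → k ≠ i → equiv (α.cond X j) (α.cond X k) := by
    intro j k hj hk w
    rw [cond_eq X j k α (h j hj) (h k hk)]
  refine ⟨ent, heqv, ?_⟩
  intro w
  unfold quant
  rw [eval_foldr]
  by_cases hwX : w X = i
  · have hb : eval w (α.cond X i) = eval w α := by
      rw [eval_cond, ← hwX, Function.update_eq_self]
    have hall : (Finset.univ.filter (fun j => j ≠ i)).toList.all
        (fun j => eval w (state X i) || eval w (α.cond X j)) = true := by
      rw [List.all_eq_true]
      intro j _
      have : eval w (state X i) = true := by simp [eval, hwX]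
      simp [this]
    rw [hb, hall, Bool.and_true]
  · have hsi : eval w (state X i) = false := by simp [eval, hwX]
    have hev : ∀ j : σ X, j ≠ i → eval w (α.cond X j) = eval w α := by
      intro j hj
      rw [cond_eq X j (w X) α (h j hj) (h (w X) hwX), eval_cond,
          Function.update_eq_self]
    have hmem : w X ∈ (Finset.univ.filter (fun j => j ≠ i)).toList :=
      Finset.mem_toList.mpr (Finset.mem_filter.mpr ⟨Finset.mem_univ _, hwX⟩)
    cases hevα : eval w α with
    | false =>
        have : (Finset.univ.filter (fun j => j ≠ i)).toList.all
            (fun j => eval w (state X i) || eval w (α.cond X j)) = false := by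
          rw [List.all_eq_false]
          exact ⟨w X, hmem, by simp [hsi, hev (w X) hwX, hevα]⟩
        rw [this, Bool.and_false]
    | true =>
        have hb : eval w (α.cond X i) = true :=
          ent (w X) hwX w (by rw [hev (w X) hwX]; exact hevα)
        have hall : (Finset.univ.filter (fun j => j ≠ i)).toList.all
            (fun j => eval w (state X i) || eval w (α.cond X j)) = true := by
          rw [List.all_eq_true]
          intro j hjl
          have hj : j ≠ i := (Finset.mem_filter.mp (Finset.mem_toList.mp hjl)).2
          simp [hsi, hev j hj, hevα]
        rw [hb, hall, Bool.and_true]
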